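/- Let V be a finite set, ℰ_f a finite multiset of subsets of V, S ⊆ V, ℰ_r ⊆ ℰ_f the hyperedges not intersecting S, and d_S = |ℰ_f| − |ℰ_r|. For any S* ⊆ V with |S*| = k, Cov(S*, ℰ_f) ≤ d_S + Σ over the k largest values of Cov({v}, ℰ_r) among v ∈ V. -/

import Mathlib

/-!
Split `ℰf` into `ℰr` and the hyperedges meeting `S`: the latter are `dS` in number, so they
contribute at most `dS` to the coverage of `S*`. On `ℰr`, coverage is subadditive in the seed
set, so `Cov(S*, ℰr) ≤ ∑_{v ∈ S*} Cov({v}, ℰr)`, a sum over a `k`-set and hence at most the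
top-`k` sum.
-/

/-- Coverage: number of hyperedges in the multiset `ℰ` intersecting `S`. -/
def Cov {V : Type*} [DecidableEq V] (S : Finset V) (ℰ : Multiset (Finset V)) : ℕ :=
  (ℰ.filter (fun E => (S ∩ E).Nonempty)).card

/-- Sum of the `k` largest values of `f` over `V` = maximum, over size-`k` subsets `T` of `V`,
of the sum of `f` over `T`. -/
def topkSum {V : Type*} [Fintype V] [DecidableEq V] (k : ℕ) (f : V → ℕ) : ℕ :=
  (Finset.univ.powersetCard k).sup (fun T => ∑ v ∈ T, f v)

section Coverage

variable {V : Type*} [DecidableEq V]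

theorem cov_add (T : Finset V) (ℰ₁ ℰ₂ : Multiset (Finset V)) :
    Cov T (ℰ₁ + ℰ₂) = Cov T ℰ₁ + Cov T ℰ₂ := by
  simp only [Cov, Multiset.filter_add, Multiset.card_add]

theorem cov_le_card (T : Finset V) (ℰ : Multiset (Finset V)) : Cov T ℰ ≤ Multiset.card ℰ :=
  Multiset.card_le_card (Multiset.filter_le _ ℰ)

@[simp]
theorem cov_empty (ℰ : Multiset (Finset V)) : Cov ∅ ℰ = 0 := by
  simp [Cov]

theorem cov_union_le (A B : Finset V) (ℰ : Multiset (Finset V)) :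
    Cov (A ∪ B) ℰ ≤ Cov A ℰ + Cov B ℰ := by
  have hunion : ∀ E : Finset V,
      ((A ∪ B) ∩ E).Nonempty ↔ (A ∩ E).Nonempty ∨ (B ∩ E).Nonempty := fun E => by
    rw [Finset.union_inter_distrib_right, Finset.union_nonempty]
  unfold Cov
  rw [Multiset.filter_congr fun E _ => hunion E, ← Multiset.card_add,
    Multiset.filter_add_filter, Multiset.card_add]
  exact Nat.le_add_right _ _

theorem cov_le_sum_cov_singleton (T : Finset V) (ℰ : Multiset (Finset V)) :
    Cov T ℰ ≤ ∑ v ∈ T, Cov {v} ℰ := by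
  induction T using Finset.induction_on with
  | empty => simp
  | insert a T ha ih =>
    rw [Finset.sum_insert ha, Finset.insert_eq]
    exact (cov_union_le _ _ ℰ).trans (Nat.add_le_add_left ih _)

theorem cov_le_card_sub_add_cov {ℰ ℰ' : Multiset (Finset V)} (h : ℰ' ≤ ℰ) (T : Finset V) :
    Cov T ℰ ≤ Multiset.card ℰ - Multiset.card ℰ' + Cov T ℰ' := by
  calc Cov T ℰ = Cov T ℰ' + Cov T (ℰ - ℰ') := by rw [← cov_add, add_tsub_cancel_of_le h]
    _ ≤ Cov T ℰ' + Multiset.card (ℰ - ℰ') := Nat.add_le_add_left (cov_le_card _ _) _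
    _ = Multiset.card ℰ - Multiset.card ℰ' + Cov T ℰ' := by
      rw [Multiset.card_sub h, add_comm]

end Coverage

theorem sum_le_topkSum {V : Type*} [Fintype V] [DecidableEq V] {k : ℕ} {T : Finset V}
    (hT : T.card = k) (f : V → ℕ) : ∑ v ∈ T, f v ≤ topkSum k f :=
  Finset.le_sup (f := fun T => ∑ v ∈ T, f v)
    (Finset.mem_powersetCard.2 ⟨Finset.subset_univ T, hT⟩)

theorem stmt_7 {V : Type*} [Fintype V] [DecidableEq V]
    (ℰf ℰr : Multiset (Finset V)) (S : Finset V)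
    (hr : ℰr = ℰf.filter (fun E => ¬ (S ∩ E).Nonempty))
    (dS : ℕ) (hd : dS = Multiset.card ℰf - Multiset.card ℰr)
    (k : ℕ) (Sstar : Finset V) (hcard : Sstar.card = k) :
    Cov Sstar ℰf ≤ dS + topkSum k (fun v => Cov ({v} : Finset V) ℰr) := by
  have hsub : ℰr ≤ ℰf := hr ▸ Multiset.filter_le _ ℰf
  calc Cov Sstar ℰf ≤ dS + Cov Sstar ℰr := hd ▸ cov_le_card_sub_add_cov hsub Sstar
    _ ≤ dS + ∑ v ∈ Sstar, Cov {v} ℰr := Nat.add_le_add_left (cov_le_sum_cov_singleton _ _) _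
    _ ≤ dS + topkSum k (fun v => Cov ({v} : Finset V) ℰr) :=
      Nat.add_le_add_left (sum_le_topkSum hcard _) _
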